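/- Suppose v : (0,1) → ℝ is twice differentiable, satisfies l'(1-l')·v''(l') = (3/16)·v(l'), that v(l') → 1 as l' → 0⁺, and that v'(l') - (3/16)·ln l' → -(9/8)·ln 2 as l' → 0⁺. If W_A and W_C are the two linearly independent Frobenius solutions (W_A(x) = Σ a_i x^{i+1} with a₀ = 1; W_C(x) = (3/16)·Σ b_i x^i + (3/16)·ln x · W_A(x) with b₀ = 16/3, b₁ = -1, and a_i, b_i given by the recurrences a_{i+1} = (i(i+1)+3/16)a_i/((i+1)(i+2)) and b_{i+1} = ((2i-1)a_{i-1}-(2i+1)a_i+((i-1)i+3/16)b_i)/(i(i+1)) for i ≥ 1), then v = A·W_A + C·W_C on (0,1) with C = 1 and A = -(9/8)·ln 2. -/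

import Mathlib

/-!
At `x = 0` the equation `x (1 - x) y'' = μ y` has a regular singular point with indicial exponents
`0` and `1`. The exponent-one Frobenius series `W_A = ∑ aᵢ x^(i+1)` solves it; since the exponents
differ by an integer, the second solution carries a logarithm, `W_C = μ (∑ bᵢ xⁱ + log x · W_A)`,
and the recurrence for `bᵢ` says exactly that `B = ∑ bᵢ xⁱ` satisfies
`x (1 - x) B'' - μ B = (1 - x) (W_A / x - 2 W_A')`, the defect that `log x · W_A` has to compensate.
Both coefficient sequences grow at most polynomially, so the series converge on `(-1, 1)` and may be
differentiated termwise.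

The difference `D = v - A W_A - W_C` solves the equation with `D, D' → 0` at `0⁺`. If `|D'| ≤ N` on
`(0, T]`, then `|D| ≤ N x`, so `|D''| ≤ 2 |μ| N` and `|D'| ≤ 2 |μ| N T ≤ N / 2` once `T` is small;
hence `D = D' = 0` near `0`. Away from `0` the coefficient `μ / (x (1 - x))` is bounded, and
Grönwall's inequality for `(D, D')` carries the vanishing to all of `(0, 1)`.
-/

open Filter Topology Set Asymptotics Real

namespace Frobenius

def PolyGrowth (c : ℕ → ℝ) : Prop :=
  ∃ K : ℝ, ∃ k : ℕ, ∀ n, |c n| ≤ K * ((n : ℝ) + 1) ^ k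

noncomputable def powSeries (c : ℕ → ℝ) (x : ℝ) : ℝ := ∑' n, c n * x ^ n

noncomputable def derivCoeff (c : ℕ → ℝ) (n : ℕ) : ℝ := (n + 1) * c (n + 1)

def shiftCoeff (c : ℕ → ℝ) : ℕ → ℝ
  | 0 => 0
  | n + 1 => c n

section

variable {c : ℕ → ℝ} {x s : ℝ}

lemma abs_lt_one_of_mem_Ioo (hx : x ∈ Ioo (0 : ℝ) 1) : |x| < 1 :=
  abs_lt.2 ⟨by linarith [hx.1], hx.2⟩

lemma summable_add_one_pow_mul_geometric (k : ℕ) {r : ℝ} (hr0 : 0 ≤ r) (hr1 : r < 1) :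
    Summable fun n : ℕ => ((n : ℝ) + 1) ^ k * r ^ n := by
  have hpow := summable_pow_mul_geometric_of_norm_lt_one k (r := r) (by rwa [norm_of_nonneg hr0])
  refine Summable.of_nonneg_of_le (fun n => by positivity) (fun n => ?_)
    ((hpow.add (summable_geometric_of_lt_one hr0 hr1)).mul_left (2 ^ (k - 1)))
  calc ((n : ℝ) + 1) ^ k * r ^ n ≤ 2 ^ (k - 1) * ((n : ℝ) ^ k + 1 ^ k) * r ^ n := by
        gcongr; exact add_pow_le n.cast_nonneg zero_le_one k
    _ = 2 ^ (k - 1) * ((n : ℝ) ^ k * r ^ n + r ^ n) := by ring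

lemma const_nonneg_of_abs_le_mul_pow {K : ℝ} {k : ℕ} (hK : ∀ n, |c n| ≤ K * ((n : ℝ) + 1) ^ k) :
    0 ≤ K := by
  simpa using (abs_nonneg _).trans (hK 0)

lemma PolyGrowth.summable_abs_mul_pow (hc : PolyGrowth c) {r : ℝ} (hr0 : 0 ≤ r) (hr1 : r < 1) :
    Summable fun n => |c n| * r ^ n := by
  obtain ⟨K, k, hK⟩ := hc
  refine Summable.of_nonneg_of_le (fun n => by positivity) (fun n => ?_)
    ((summable_add_one_pow_mul_geometric k hr0 hr1).mul_left K)
  rw [← mul_assoc]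
  exact mul_le_mul_of_nonneg_right (hK n) (pow_nonneg hr0 n)

lemma PolyGrowth.summable (hc : PolyGrowth c) (hx : |x| < 1) :
    Summable fun n => c n * x ^ n :=
  .of_norm (by simpa [abs_mul, abs_pow] using hc.summable_abs_mul_pow (abs_nonneg x) hx)

lemma PolyGrowth.derivCoeff (hc : PolyGrowth c) : PolyGrowth (derivCoeff c) := by
  obtain ⟨K, k, hK⟩ := hc
  have hK0 := const_nonneg_of_abs_le_mul_pow hK
  refine ⟨2 ^ k * K, k + 1, fun n => ?_⟩
  calc |Frobenius.derivCoeff c n| = ((n : ℝ) + 1) * |c (n + 1)| := by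
        rw [Frobenius.derivCoeff, abs_mul, abs_of_nonneg (by positivity)]
    _ ≤ ((n : ℝ) + 1) * (K * (2 * ((n : ℝ) + 1)) ^ k) := by
        gcongr
        refine (hK (n + 1)).trans ?_
        push_cast
        gcongr
        linarith
    _ = 2 ^ k * K * ((n : ℝ) + 1) ^ (k + 1) := by rw [mul_pow]; ring

lemma PolyGrowth.shiftCoeff (hc : PolyGrowth c) : PolyGrowth (shiftCoeff c) := by
  obtain ⟨K, k, hK⟩ := hc
  refine ⟨K, k, fun n => ?_⟩
  rcases n with _ | n
  · simpa [Frobenius.shiftCoeff] using const_nonneg_of_abs_le_mul_pow hK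
  · refine (hK n).trans ?_
    gcongr
    · exact const_nonneg_of_abs_le_mul_pow hK
    · linarith

lemma powSeries_zero (c : ℕ → ℝ) : powSeries c 0 = c 0 := by
  rw [powSeries, tsum_eq_single 0 fun n hn => by simp [hn]]
  simp

lemma hasDerivAt_powSeries (hc : PolyGrowth c) (hx : |x| < 1) :
    HasDerivAt (powSeries c) (powSeries (derivCoeff c) x) x := by
  set r := (1 + |x|) / 2
  have hr0 : 0 < r := by positivity
  have hxr : |x| < r := by simp only [r]; linarith
  have hr1 : r < 1 := by simp only [r]; linarith
  have hu : Summable fun n : ℕ => |n * c n| * r ^ (n - 1) := by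
    rw [← summable_nat_add_iff 1]
    simpa [Frobenius.derivCoeff, abs_mul] using hc.derivCoeff.summable_abs_mul_pow hr0.le hr1
  have hderiv : HasDerivAt (fun y => ∑' n, c n * y ^ n) (∑' n : ℕ, n * c n * x ^ (n - 1)) x := by
    refine hasDerivAt_tsum_of_isPreconnected (g' := fun n y => n * c n * y ^ (n - 1))
      (t := Ioo (-r) r) hu isOpen_Ioo isPreconnected_Ioo (fun n y _ => ?_) (fun n y hy => ?_)
      (y₀ := 0) ⟨by linarith, hr0⟩ (hc.summable (by simp))
      ⟨by linarith [neg_abs_le x], by linarith [le_abs_self x]⟩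
    · exact ((hasDerivAt_pow n y).const_mul (c n)).congr_deriv (by ring)
    · rw [norm_mul, norm_pow, norm_eq_abs, norm_eq_abs]
      gcongr
      exact abs_le.2 ⟨hy.1.le, hy.2.le⟩
  rw [tsum_eq_zero_add' (by simpa [Frobenius.derivCoeff] using hc.derivCoeff.summable hx)] at hderiv
  show HasDerivAt (fun y => ∑' n, c n * y ^ n) (∑' n, Frobenius.derivCoeff c n * x ^ n) x
  simpa [Frobenius.derivCoeff] using hderiv

lemma PolyGrowth.tendsto_powSeries (hc : PolyGrowth c) :
    Tendsto (powSeries c) (𝓝[>] 0) (𝓝 (c 0)) := by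
  have h := (hasDerivAt_powSeries hc (x := 0) (by simp)).continuousAt.tendsto
  rw [powSeries_zero] at h
  exact h.mono_left nhdsWithin_le_nhds

lemma PolyGrowth.tendsto_log_mul_powSeries_sub (hc : PolyGrowth c) :
    Tendsto (fun x => log x * (powSeries c x - c 0)) (𝓝[>] 0) (𝓝 0) := by
  have hO : (fun x => powSeries c x - c 0) =O[𝓝 0] fun x => x := by
    simpa [powSeries_zero] using (hasDerivAt_powSeries hc (x := 0) (by simp)).isBigO_sub
  have hlog : Tendsto (fun x => log x * x) (𝓝 0) (𝓝 0) := by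
    simpa [mul_comm] using continuous_mul_log.tendsto 0
  exact (((isBigO_refl log _).mul hO).trans_tendsto hlog).mono_left nhdsWithin_le_nhds

lemma hasSum_shiftCoeff_mul_pow (h : HasSum (fun n => c n * x ^ n) s) :
    HasSum (fun n => shiftCoeff c n * x ^ n) (x * s) := by
  rw [← hasSum_nat_add_iff' 1]
  simpa [shiftCoeff, pow_succ, mul_comm, mul_left_comm] using h.mul_left x

lemma powSeries_shiftCoeff (h : Summable fun n => c n * x ^ n) :
    powSeries (shiftCoeff c) x = x * powSeries c x :=
  (hasSum_shiftCoeff_mul_pow h.hasSum).tsum_eq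

lemma hasSum_sub_shiftCoeff_mul_pow (h : HasSum (fun n => c n * x ^ n) s) :
    HasSum (fun n => (c n - shiftCoeff c n) * x ^ n) ((1 - x) * s) := by
  simpa [sub_mul] using h.sub (hasSum_shiftCoeff_mul_pow h)

lemma hasSum_ode_powSeries (hc : PolyGrowth c) (μ : ℝ) (hx : |x| < 1) :
    HasSum (fun n : ℕ => (((n : ℝ) + 1) * n * c (n + 1) - (n * (n - 1) + μ) * c n) * x ^ n)
      (x * (1 - x) * powSeries (derivCoeff (derivCoeff c)) x - μ * powSeries c x) := by
  have hshift := hasSum_sub_shiftCoeff_mul_pow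
    (hasSum_shiftCoeff_mul_pow (hc.derivCoeff.derivCoeff.summable hx).hasSum)
  rw [show x * (1 - x) * powSeries (derivCoeff (derivCoeff c)) x - μ * powSeries c x =
    (1 - x) * (x * powSeries (derivCoeff (derivCoeff c)) x) - μ * powSeries c x by ring]
  refine (hshift.sub ((hc.summable hx).hasSum.mul_left μ)).congr_fun fun n => ?_
  rcases n with _ | _ | n <;> simp [shiftCoeff, derivCoeff] <;> ring

end

lemma abs_le_mul_of_abs_deriv_le {f f' : ℝ → ℝ} {T M : ℝ}
    (hf : ∀ x ∈ Ioc 0 T, HasDerivAt f (f' x) x) (hM : ∀ x ∈ Ioc 0 T, |f' x| ≤ M)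
    (h0 : Tendsto f (𝓝[>] 0) (𝓝 0)) {x : ℝ} (hx : x ∈ Ioc 0 T) : |f x| ≤ M * x := by
  have hid : Tendsto (fun s : ℝ => s) (𝓝[>] 0) (𝓝 0) := tendsto_id.mono_left nhdsWithin_le_nhds
  have hlhs : Tendsto (fun s => |f x - f s|) (𝓝[>] 0) (𝓝 |f x|) := by
    simpa using (tendsto_const_nhds.sub h0).abs
  have hrhs : Tendsto (fun s => M * (x - s)) (𝓝[>] 0) (𝓝 (M * x)) := by
    simpa using tendsto_const_nhds.mul (tendsto_const_nhds.sub hid)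
  refine le_of_tendsto_of_tendsto hlhs hrhs ?_
  filter_upwards [Ioo_mem_nhdsGT hx.1] with s hs
  have hsub : Icc s x ⊆ Ioc 0 T := fun u hu => ⟨hs.1.trans_le hu.1, hu.2.trans hx.2⟩
  have := (convex_Icc s x).norm_image_sub_le_of_norm_hasDerivWithin_le
    (fun u hu => (hf u (hsub hu)).hasDerivWithinAt) (fun u hu => hM u (hsub hu))
    (left_mem_Icc.2 hs.2.le) (right_mem_Icc.2 hs.2.le)
  rwa [norm_eq_abs, norm_eq_abs, abs_of_pos (sub_pos.2 hs.2)] at this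

def SolvesODE (μ : ℝ) (y y' y'' : ℝ → ℝ) : Prop :=
  ∀ x ∈ Ioo (0 : ℝ) 1,
    HasDerivAt y (y' x) x ∧ HasDerivAt y' (y'' x) x ∧ x * (1 - x) * y'' x = μ * y x

namespace SolvesODE

variable {μ : ℝ} {f f' f'' g g' g'' y y' y'' : ℝ → ℝ}

lemma add (hf : SolvesODE μ f f' f'') (hg : SolvesODE μ g g' g'') :
    SolvesODE μ (fun x => f x + g x) (fun x => f' x + g' x) (fun x => f'' x + g'' x) :=
  fun x hx => by
    obtain ⟨hf₁, hf₂, hf₃⟩ := hf x hx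
    obtain ⟨hg₁, hg₂, hg₃⟩ := hg x hx
    exact ⟨hf₁.add hg₁, hf₂.add hg₂, by linear_combination hf₃ + hg₃⟩

lemma sub (hf : SolvesODE μ f f' f'') (hg : SolvesODE μ g g' g'') :
    SolvesODE μ (fun x => f x - g x) (fun x => f' x - g' x) (fun x => f'' x - g'' x) :=
  fun x hx => by
    obtain ⟨hf₁, hf₂, hf₃⟩ := hf x hx
    obtain ⟨hg₁, hg₂, hg₃⟩ := hg x hx
    exact ⟨hf₁.sub hg₁, hf₂.sub hg₂, by linear_combination hf₃ - hg₃⟩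

lemma const_mul (hf : SolvesODE μ f f' f'') (r : ℝ) :
    SolvesODE μ (fun x => r * f x) (fun x => r * f' x) (fun x => r * f'' x) :=
  fun x hx => by
    obtain ⟨hf₁, hf₂, hf₃⟩ := hf x hx
    exact ⟨hf₁.const_mul r, hf₂.const_mul r, by linear_combination r * hf₃⟩

lemma add_log_mul (hf : SolvesODE μ f f' f'')
    (hg' : ∀ x ∈ Ioo (0 : ℝ) 1, HasDerivAt g (g' x) x)
    (hg'' : ∀ x ∈ Ioo (0 : ℝ) 1, HasDerivAt g' (g'' x) x)
    (hg : ∀ x ∈ Ioo (0 : ℝ) 1, x * (1 - x) * g'' x = μ * g x + (1 - x) * (f x / x - 2 * f' x)) :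
    SolvesODE μ (fun x => g x + log x * f x) (fun x => g' x + f x / x + log x * f' x)
      (fun x => g'' x + (2 * f' x - f x / x) / x + log x * f'' x) := by
  intro x hx
  obtain ⟨hf₁, hf₂, hf₃⟩ := hf x hx
  have hx0 : x ≠ 0 := hx.1.ne'
  have hlog := hasDerivAt_log hx0
  refine ⟨((hg' x hx).add (hlog.mul hf₁)).congr_deriv (by field_simp; ring),
    (((hg'' x hx).add (hf₁.div (hasDerivAt_id x) hx0)).add (hlog.mul hf₂)).congr_deriv
      (by simp only [id]; field_simp; ring), ?_⟩
  have hxx : x * x⁻¹ = 1 := mul_inv_cancel₀ hx0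
  linear_combination hg x hx + log x * hf₃ + (1 - x) * (2 * f' x - f x / x) * hxx

lemma abs_deriv2_le (h : SolvesODE μ f f' f'') {x m : ℝ} (hx : x ∈ Ioo (0 : ℝ) 1) (hm : 0 < m)
    (hmx : m ≤ x * (1 - x)) : |f'' x| ≤ |μ| / m * |f x| := by
  rw [div_mul_eq_mul_div, le_div_iff₀ hm]
  calc |f'' x| * m ≤ |f'' x| * (x * (1 - x)) := by gcongr
    _ = |x * (1 - x) * f'' x| := by
        rw [abs_mul, abs_of_pos (mul_pos hx.1 (sub_pos.2 hx.2)), mul_comm]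
    _ = |μ| * |f x| := by rw [(h x hx).2.2, abs_mul]

lemma abs_deriv_le_half (h : SolvesODE μ y y' y'') (h0 : Tendsto y (𝓝[>] 0) (𝓝 0))
    (h0' : Tendsto y' (𝓝[>] 0) (𝓝 0)) {T N : ℝ} (hT : 0 < T) (hT2 : T ≤ 1 / 2)
    (hTμ : 4 * |μ| * T ≤ 1) (hN : ∀ x ∈ Ioc 0 T, |y' x| ≤ N) {x : ℝ} (hx : x ∈ Ioc 0 T) :
    |y' x| ≤ N / 2 := by
  have hmem : ∀ u ∈ Ioc 0 T, u ∈ Ioo (0 : ℝ) 1 := fun u hu => ⟨hu.1, by linarith [hu.2]⟩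
  have hN0 : 0 ≤ N := (abs_nonneg _).trans (hN T ⟨hT, le_rfl⟩)
  have hy : ∀ u ∈ Ioc 0 T, |y u| ≤ N * u :=
    fun u hu => abs_le_mul_of_abs_deriv_le (fun u hu => (h u (hmem u hu)).1) hN h0 hu
  have hy'' : ∀ u ∈ Ioc 0 T, |y'' u| ≤ 2 * |μ| * N := fun u hu => by
    calc |y'' u| ≤ |μ| / (u / 2) * |y u| :=
          h.abs_deriv2_le (hmem u hu) (by linarith [hu.1]) (by nlinarith [hu.1, hu.2])
      _ ≤ |μ| / (u / 2) * (N * u) :=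
          mul_le_mul_of_nonneg_left (hy u hu) (div_nonneg (abs_nonneg μ) (by linarith [hu.1]))
      _ = 2 * |μ| * N := by field_simp [hu.1.ne']
  calc |y' x| ≤ 2 * |μ| * N * x :=
        abs_le_mul_of_abs_deriv_le (fun u hu => (h u (hmem u hu)).2.1) hy'' h0' hx
    _ ≤ 2 * |μ| * N * T := by gcongr; exact hx.2
    _ ≤ N / 2 := by nlinarith

lemma exists_eq_zero_near_zero (h : SolvesODE μ y y' y'') (h0 : Tendsto y (𝓝[>] 0) (𝓝 0))
    (h0' : Tendsto y' (𝓝[>] 0) (𝓝 0)) : ∃ T > 0, ∀ x ∈ Ioc 0 T, y x = 0 ∧ y' x = 0 := by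
  obtain ⟨T₀, hT₀, hbound⟩ := mem_nhdsGT_iff_exists_Ioc_subset.1
    (h0'.eventually (Metric.closedBall_mem_nhds 0 one_pos))
  set T := min T₀ (1 / (4 * |μ| + 2))
  have hT : 0 < T := lt_min hT₀ (by positivity)
  have hTμ : 4 * |μ| * T ≤ 1 := by
    have : T ≤ 1 / (4 * |μ| + 2) := min_le_right _ _
    rw [le_div_iff₀ (by positivity)] at this
    nlinarith [abs_nonneg μ]
  have hT2 : T ≤ 1 / 2 := (min_le_right _ _).trans
    (one_div_le_one_div_of_le (by norm_num) (by linarith [abs_nonneg μ]))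
  have hpow : ∀ k : ℕ, ∀ x ∈ Ioc 0 T, |y' x| ≤ (1 / 2) ^ k := by
    intro k
    induction k with
    | zero => exact fun x hx => by simpa using hbound ⟨hx.1, hx.2.trans (min_le_left _ _)⟩
    | succ k ih =>
      intro x hx
      rw [pow_succ]
      linarith [h.abs_deriv_le_half h0 h0' hT hT2 hTμ ih hx]
  have hy'0 : ∀ x ∈ Ioc 0 T, y' x = 0 := fun x hx => abs_nonpos_iff.1 <|
    ge_of_tendsto' (tendsto_pow_atTop_nhds_zero_of_lt_one (by norm_num) (by norm_num))
      fun k => hpow k x hx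
  refine ⟨T, hT, fun x hx => ⟨abs_nonpos_iff.1 ?_, hy'0 x hx⟩⟩
  simpa using abs_le_mul_of_abs_deriv_le (M := 0) (fun u hu => (h u ⟨hu.1, by linarith [hu.2]⟩).1)
    (fun u hu => by simp [hy'0 u hu]) h0 hx

lemma eq_zero_of_eq_zero_of_deriv_eq_zero (h : SolvesODE μ y y' y'') {t₀ : ℝ} (ht₀ : 0 < t₀)
    (hy : y t₀ = 0) (hy' : y' t₀ = 0) {x : ℝ} (hx : x ∈ Ico t₀ 1) : y x = 0 := by
  have hmem : ∀ t ∈ Icc t₀ x, t ∈ Ioo (0 : ℝ) 1 := fun t ht =>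
    ⟨ht₀.trans_le ht.1, ht.2.trans_lt hx.2⟩
  have hm : 0 < t₀ * (1 - x) := mul_pos ht₀ (sub_pos.2 hx.2)
  set C := |μ| / (t₀ * (1 - x))
  have hC : 0 ≤ C := by positivity
  have hderiv : ∀ t ∈ Icc t₀ x, HasDerivAt (fun t => (y t, y' t)) (y' t, y'' t) t :=
    fun t ht => (h t (hmem t ht)).1.prodMk (h t (hmem t ht)).2.1
  have hbound : ∀ t ∈ Ico t₀ x, ‖(y' t, y'' t)‖ ≤ (1 + C) * ‖(y t, y' t)‖ := by
    intro t ht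
    have ht' := Ico_subset_Icc_self ht
    have hy'' : |y'' t| ≤ C * |y t| := h.abs_deriv2_le (hmem t ht') hm
      (by nlinarith [ht'.1, ht'.2, (hmem t ht').2])
    simp only [Prod.norm_def, norm_eq_abs]
    have h1 := le_max_left |y t| |y' t|
    have h2 := le_max_right |y t| |y' t|
    refine max_le ?_ ?_ <;> nlinarith [abs_nonneg (y t)]
  have key := eq_zero_of_abs_deriv_le_mul_abs_self_of_eq_zero_right
    (fun t ht => (hderiv t ht).continuousAt.continuousWithinAt)
    (fun t ht => (hderiv t (Ico_subset_Icc_self ht)).hasDerivWithinAt)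
    (by simp [hy, hy']) hbound x ⟨hx.1, le_rfl⟩
  exact congrArg Prod.fst key

lemma eq_zero_of_tendsto (h : SolvesODE μ y y' y'') (h0 : Tendsto y (𝓝[>] 0) (𝓝 0))
    (h0' : Tendsto y' (𝓝[>] 0) (𝓝 0)) : ∀ x ∈ Ioo (0 : ℝ) 1, y x = 0 := by
  obtain ⟨T, hT, hzero⟩ := h.exists_eq_zero_near_zero h0 h0'
  intro x hx
  have ht₀ : min x T ∈ Ioc 0 T := ⟨lt_min hx.1 hT, min_le_right _ _⟩
  exact h.eq_zero_of_eq_zero_of_deriv_eq_zero ht₀.1 (hzero _ ht₀).1 (hzero _ ht₀).2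
    ⟨min_le_left _ _, hx.2⟩

end SolvesODE

variable {a b c : ℕ → ℝ} {μ : ℝ}

lemma solvesODE_powSeries (hc : PolyGrowth c)
    (hrec : ∀ n : ℕ, ((n : ℝ) + 1) * n * c (n + 1) = (n * (n - 1) + μ) * c n) :
    SolvesODE μ (powSeries c) (powSeries (derivCoeff c))
      (powSeries (derivCoeff (derivCoeff c))) := by
  intro x hx
  have hx1 := abs_lt_one_of_mem_Ioo hx
  refine ⟨hasDerivAt_powSeries hc hx1, hasDerivAt_powSeries hc.derivCoeff hx1, ?_⟩
  have h := hasSum_ode_powSeries hc μ hx1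
  simp only [hrec, sub_self, zero_mul] at h
  linarith [h.unique hasSum_zero]

lemma abs_le_one_of_rec (hμ0 : 0 ≤ μ) (hμ2 : μ ≤ 2) (ha0 : a 0 = 1)
    (ha : ∀ i : ℕ, a (i + 1) = ((i * (i + 1) + μ) * a i) / ((i + 1) * (i + 2))) :
    ∀ n, |a n| ≤ 1 := by
  intro n
  induction n with
  | zero => simp [ha0]
  | succ n ih =>
    have hn : (0 : ℝ) ≤ n := n.cast_nonneg
    rw [ha n, abs_div, abs_mul, abs_of_nonneg (by positivity : (0 : ℝ) ≤ n * (n + 1) + μ),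
      abs_of_pos (by positivity : (0 : ℝ) < (n + 1) * (n + 2)), div_le_one (by positivity)]
    calc (n * (n + 1) + μ) * |a n| ≤ (n * (n + 1) + μ) * 1 := by gcongr
      _ ≤ (n + 1) * (n + 2) := by nlinarith

lemma abs_le_six_mul_of_rec (hμ0 : 0 ≤ μ) (hμ2 : μ ≤ 2) (ha1 : ∀ n, |a n| ≤ 1) (hb0 : |b 0| ≤ 6)
    (hb1 : |b 1| ≤ 12)
    (hb : ∀ i : ℕ, 1 ≤ i → b (i + 1) =
      ((2 * i - 1) * a (i - 1) - (2 * i + 1) * a i + ((i - 1) * i + μ) * b i) / (i * (i + 1))) :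
    ∀ n : ℕ, |b n| ≤ 6 * (n + 1) := by
  intro n
  induction n with
  | zero => simpa using hb0
  | succ n ih =>
    rcases Nat.eq_zero_or_pos n with rfl | hn
    · norm_num [hb1]
    have hn1 : (1 : ℝ) ≤ n := by exact_mod_cast hn
    rw [hb n hn, abs_div, abs_of_pos (by positivity : (0 : ℝ) < n * (n + 1)),
      div_le_iff₀ (by positivity)]
    have h1 : |(2 * (n : ℝ) - 1) * a (n - 1)| ≤ 2 * n - 1 := by
      rw [abs_mul, abs_of_nonneg (by linarith)]
      exact mul_le_of_le_one_right (by linarith) (ha1 _)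
    have h2 : |(2 * (n : ℝ) + 1) * a n| ≤ 2 * n + 1 := by
      rw [abs_mul, abs_of_nonneg (by linarith)]
      exact mul_le_of_le_one_right (by linarith) (ha1 _)
    have h3 : |((n - 1) * n + μ) * b n| ≤ ((n - 1) * n + μ) * (6 * (n + 1)) := by
      rw [abs_mul, abs_of_nonneg (by nlinarith)]
      exact mul_le_mul_of_nonneg_left ih (by nlinarith)
    have h := abs_add_three ((2 * (n : ℝ) - 1) * a (n - 1)) (-((2 * (n : ℝ) + 1) * a n))
      (((n - 1) * n + μ) * b n)
    rw [abs_neg, ← sub_eq_add_neg] at h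
    push_cast
    nlinarith

lemma solvesODE_powSeries_shiftCoeff (ha : PolyGrowth (shiftCoeff a))
    (hrec : ∀ i : ℕ, a (i + 1) = ((i * (i + 1) + μ) * a i) / ((i + 1) * (i + 2))) :
    SolvesODE μ (powSeries (shiftCoeff a)) (powSeries (derivCoeff (shiftCoeff a)))
      (powSeries (derivCoeff (derivCoeff (shiftCoeff a)))) :=
  solvesODE_powSeries ha fun n => by
    rcases n with _ | n
    · simp [shiftCoeff]
    · simp only [shiftCoeff, hrec n]
      push_cast
      field_simp
      ring

lemma solvesODE_powSeries_add_log_mul (ha : PolyGrowth a) (hb : PolyGrowth b)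
    (ha_rec : ∀ i : ℕ, a (i + 1) = ((i * (i + 1) + μ) * a i) / ((i + 1) * (i + 2)))
    (hb0 : μ * b 0 = a 0)
    (hb_rec : ∀ i : ℕ, 1 ≤ i → b (i + 1) =
      ((2 * i - 1) * a (i - 1) - (2 * i + 1) * a i + ((i - 1) * i + μ) * b i) / (i * (i + 1))) :
    SolvesODE μ (fun x => powSeries b x + log x * powSeries (shiftCoeff a) x)
      (fun x => powSeries (derivCoeff b) x + powSeries (shiftCoeff a) x / x +
        log x * powSeries (derivCoeff (shiftCoeff a)) x)
      (fun x => powSeries (derivCoeff (derivCoeff b)) x +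
        (2 * powSeries (derivCoeff (shiftCoeff a)) x - powSeries (shiftCoeff a) x / x) / x +
        log x * powSeries (derivCoeff (derivCoeff (shiftCoeff a))) x) := by
  refine (solvesODE_powSeries_shiftCoeff ha.shiftCoeff ha_rec).add_log_mul
    (fun x hx => hasDerivAt_powSeries hb (abs_lt_one_of_mem_Ioo hx))
    (fun x hx => hasDerivAt_powSeries hb.derivCoeff (abs_lt_one_of_mem_Ioo hx)) fun x hx => ?_
  have hx1 := abs_lt_one_of_mem_Ioo hx
  have hA : HasSum (fun n : ℕ => (-(2 * n + 1) * a n) * x ^ n)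
      (powSeries (shiftCoeff a) x / x - 2 * powSeries (derivCoeff (shiftCoeff a)) x) := by
    rw [powSeries_shiftCoeff (ha.summable hx1), mul_div_cancel_left₀ _ hx.1.ne']
    refine ((ha.summable hx1).hasSum.sub
      ((ha.shiftCoeff.derivCoeff.summable hx1).hasSum.mul_left 2)).congr_fun fun n => ?_
    simp only [derivCoeff, shiftCoeff]
    ring
  have h := (hasSum_ode_powSeries hb μ hx1).unique
    ((hasSum_sub_shiftCoeff_mul_pow hA).congr_fun fun n => ?_)
  · linarith
  rcases n with _ | n
  · simp [shiftCoeff]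
    linarith
  · rw [hb_rec (n + 1) (by omega)]
    simp only [shiftCoeff, Nat.add_sub_cancel]
    push_cast
    field_simp
    ring

lemma tendsto_powSeries_add_log_mul (ha : PolyGrowth a) (hb : PolyGrowth b) :
    Tendsto (fun x => powSeries b x + log x * powSeries (shiftCoeff a) x) (𝓝[>] 0) (𝓝 (b 0)) := by
  simpa [shiftCoeff] using hb.tendsto_powSeries.add ha.shiftCoeff.tendsto_log_mul_powSeries_sub

lemma tendsto_deriv_powSeries_add_log_mul_sub_log (ha : PolyGrowth a) (hb : PolyGrowth b)
    (ha0 : a 0 = 1) :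
    Tendsto (fun x => powSeries (derivCoeff b) x + powSeries (shiftCoeff a) x / x +
      log x * powSeries (derivCoeff (shiftCoeff a)) x - log x) (𝓝[>] 0) (𝓝 (b 1 + 1)) := by
  have hdiv : Tendsto (fun x => powSeries (shiftCoeff a) x / x) (𝓝[>] 0) (𝓝 1) := by
    rw [← ha0]
    refine ha.tendsto_powSeries.congr' ?_
    filter_upwards [Ioo_mem_nhdsGT one_pos] with x hx
    rw [powSeries_shiftCoeff (ha.summable (abs_lt_one_of_mem_Ioo hx)),
      mul_div_cancel_left₀ _ hx.1.ne']
  have hlog := ha.shiftCoeff.derivCoeff.tendsto_log_mul_powSeries_sub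
  rw [show derivCoeff (shiftCoeff a) 0 = 1 by simp [derivCoeff, shiftCoeff, ha0]] at hlog
  have h := (hb.derivCoeff.tendsto_powSeries.add hdiv).add hlog
  rw [show derivCoeff b 0 = b 1 by simp [derivCoeff], add_zero] at h
  exact h.congr fun x => by ring

end Frobenius

open Frobenius

theorem v_expansion (v v' v'' : ℝ → ℝ) (a b : ℕ → ℝ)
    (hv' : ∀ x ∈ Set.Ioo (0:ℝ) 1, HasDerivAt v (v' x) x)
    (hv'' : ∀ x ∈ Set.Ioo (0:ℝ) 1, HasDerivAt v' (v'' x) x)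
    (hode : ∀ x ∈ Set.Ioo (0:ℝ) 1, x * (1-x) * v'' x = (3/16) * v x)
    (hv0 : Tendsto v (nhdsWithin 0 (Set.Ioi 0)) (nhds 1))
    (hv'0 : Tendsto (fun x => v' x - (3/16) * Real.log x)
      (nhdsWithin 0 (Set.Ioi 0)) (nhds (-(9/8) * Real.log 2)))
    (ha0 : a 0 = 1)
    (ha : ∀ i : ℕ, a (i+1) = ((i * (i+1) + 3/16) * a i) / ((i+1) * (i+2)))
    (hb0 : b 0 = 16/3) (hb1 : b 1 = -1)
    (hb : ∀ i : ℕ, 1 ≤ i → b (i+1) =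
      ((2*i - 1) * a (i-1) - (2*i + 1) * a i + ((i-1) * i + 3/16) * b i) / (i * (i+1))) :
    ∀ x ∈ Set.Ioo (0:ℝ) 1,
      v x = (-(9/8) * Real.log 2) * (∑' i : ℕ, a i * x ^ (i+1)) +
        1 * ((3/16) * (∑' i : ℕ, b i * x ^ i) +
          (3/16) * Real.log x * (∑' i : ℕ, a i * x ^ (i+1))) := by
  have ha1 := abs_le_one_of_rec (by norm_num) (by norm_num) ha0 ha
  have Pa : PolyGrowth a := ⟨1, 0, by simpa using ha1⟩
  have Pb : PolyGrowth b := ⟨6, 1, by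
    simpa using abs_le_six_mul_of_rec (by norm_num) (by norm_num) ha1 (by norm_num [hb0])
      (by norm_num [hb1]) hb⟩
  set A := -(9/8) * Real.log 2
  have hWA := solvesODE_powSeries_shiftCoeff Pa.shiftCoeff ha
  have hWC := solvesODE_powSeries_add_log_mul Pa Pb ha (by rw [hb0, ha0]; norm_num) hb
  have hv : SolvesODE (3/16) v v' v'' := fun x hx => ⟨hv' x hx, hv'' x hx, hode x hx⟩
  have hD := (hv.sub ((hWA.const_mul A).add (hWC.const_mul (3/16)))).eq_zero_of_tendsto ?_ ?_
  · intro x hx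
    have hWA_eq : ∑' i : ℕ, a i * x ^ (i + 1) = powSeries (shiftCoeff a) x := by
      rw [powSeries_shiftCoeff (Pa.summable (abs_lt_one_of_mem_Ioo hx)), powSeries,
        ← tsum_mul_left]
      exact tsum_congr fun n => by ring
    rw [hWA_eq, show ∑' i : ℕ, b i * x ^ i = powSeries b x from rfl]
    linear_combination hD x hx
  · have h := hv0.sub ((Pa.shiftCoeff.tendsto_powSeries.const_mul A).add
      ((tendsto_powSeries_add_log_mul Pa Pb).const_mul (3/16)))
    rwa [show 1 - (A * shiftCoeff a 0 + 3/16 * b 0) = 0 by simp [shiftCoeff, hb0]] at h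
  · have h := hv'0.sub ((Pa.shiftCoeff.derivCoeff.tendsto_powSeries.const_mul A).add
      ((tendsto_deriv_powSeries_add_log_mul_sub_log Pa Pb ha0).const_mul (3/16)))
    rw [show A - (A * derivCoeff (shiftCoeff a) 0 + 3/16 * (b 1 + 1)) = 0 by
      simp [derivCoeff, shiftCoeff, ha0, hb1]] at h
    exact h.congr fun x => by ring
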